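/- arXiv:math/0609283 — 2 statements merged into one kernel-verified Lean document; each statement's English description precedes it below -/
import Mathlib

section
/- For α ≥ 1 and n ≥ 0, with q = (1-√5)/(1+√5), one has (1-q^α) q^{αn} (q;q)_n^2 / ((q^α;q)_n^2 (1-q^{α+2n})) = (-1)^{αn} · (F_α / F_{α+2n}) · binom(α+n-1, n)_F^{-2}. -/
noncomputable def fibQ : ℝ := (1 - Real.sqrt 5) / (1 + Real.sqrt 5)

/-- The q-Pochhammer symbol `(a;q)_n = ∏_{j=0}^{n-1} (1 - a q^j)`. -/
noncomputable def qPoch (a q : ℝ) (n : ℕ) : ℝ := ∏ j ∈ Finset.range n, (1 - a * q ^ j)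

/-- The Fibonomial coefficient `∏_{i=1}^k F_{m-i+1}/F_i`, as a real number. -/
noncomputable def fibinom (m k : ℕ) : ℝ :=
  ∏ j ∈ Finset.range k, (Nat.fib (m - j) : ℝ) / (Nat.fib (j + 1) : ℝ)

/-!
Since `q = ψ/φ = -1/φ²`, Binet's formula reads `1 - q^m = √5 F_m / φ^m`. Every factor of the two
q-Pochhammer symbols is of this form, so both sides become products of Fibonacci numbers times
powers of `φ`, and the powers of `φ` cancel.
-/

open Real goldenRatio Finset

lemma fibQ_eq_goldenConj_div_goldenRatio : fibQ = ψ / φ := by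
  rw [fibQ, div_div_div_cancel_right₀ two_ne_zero]

lemma fibQ_pow (m : ℕ) : fibQ ^ m = (-1 : ℝ) ^ m / φ ^ (2 * m) := by
  have hφ : φ ≠ 0 := goldenRatio_ne_zero
  have h : fibQ = -1 / φ ^ 2 := by
    rw [fibQ_eq_goldenConj_div_goldenRatio, div_eq_div_iff hφ (pow_ne_zero 2 hφ), pow_two,
      ← mul_assoc, goldenConj_mul_goldenRatio]
  rw [h, div_pow, ← pow_mul]

lemma one_sub_fibQ_pow (m : ℕ) : 1 - fibQ ^ m = √5 * (Nat.fib m : ℝ) / φ ^ m := by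
  rw [fibQ_eq_goldenConj_div_goldenRatio, div_pow, Real.coe_fib_eq]
  field_simp

lemma qPoch_fibQ_pow (a n : ℕ) :
    qPoch (fibQ ^ a) fibQ n =
      √5 ^ n * (∏ j ∈ range n, (Nat.fib (a + j) : ℝ)) / φ ^ (a * n + ∑ j ∈ range n, j) := by
  rw [qPoch, prod_congr rfl fun j _ => by rw [← pow_add, one_sub_fibQ_pow], prod_div_distrib,
    prod_mul_distrib, prod_const, card_range, prod_pow_eq_pow_sum, sum_add_distrib, sum_const,
    card_range, smul_eq_mul, mul_comm n a]

lemma prod_fib_add_pos {a : ℕ} (ha : 1 ≤ a) (n : ℕ) :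
    0 < ∏ j ∈ range n, (Nat.fib (a + j) : ℝ) :=
  prod_pos fun j _ => Nat.cast_pos.mpr (Nat.fib_pos.mpr (by omega))

lemma fibinom_add_sub_one {a : ℕ} (ha : 1 ≤ a) (n : ℕ) :
    fibinom (a + n - 1) n =
      (∏ j ∈ range n, (Nat.fib (a + j) : ℝ)) / ∏ j ∈ range n, (Nat.fib (1 + j) : ℝ) := by
  rw [fibinom, prod_div_distrib, ← prod_range_reflect (fun j => (Nat.fib (a + j) : ℝ))]
  congr 1
  · refine prod_congr rfl fun j hj => ?_
    have := mem_range.mp hj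
    congr 2
    omega
  · simp only [add_comm 1]

theorem norm_constant_eq (α n : ℕ) (hα : 1 ≤ α) :
    (1 - fibQ ^ α) * fibQ ^ (α * n) * qPoch fibQ fibQ n ^ 2 /
        (qPoch (fibQ ^ α) fibQ n ^ 2 * (1 - fibQ ^ (α + 2 * n))) =
      (-1 : ℝ) ^ (α * n) * ((Nat.fib α : ℝ) / (Nat.fib (α + 2 * n) : ℝ)) *
        (fibinom (α + n - 1) n ^ 2)⁻¹ := by
  have hP := (prod_fib_add_pos le_rfl n).ne'
  have hQ := (prod_fib_add_pos hα n).ne'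
  have hF : (Nat.fib (α + 2 * n) : ℝ) ≠ 0 := by exact_mod_cast (Nat.fib_pos.mpr (by omega)).ne'
  have hA := qPoch_fibQ_pow 1 n
  rw [pow_one] at hA
  rw [hA, qPoch_fibQ_pow, fibinom_add_sub_one hα,
    one_sub_fibQ_pow, one_sub_fibQ_pow, fibQ_pow]
  field_simp
  ring
end

section
/- For α ∈ ℕ with α ≥ 1 and n ≥ 0, det((1/F_{α+i+j})_{0≤i,j≤n}) = ((-1)^{α·binom(n+1,2)} · F_α · ∏_{k=1}^n F_{α+2k} · binom(α+2k-1, k)_F^2)^{-1}; in particular this determinant is the reciprocal of a nonzero integer. -/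
open Finset

lemma cast_fib_ne_zero {n : ℕ} (hn : 0 < n) : (Nat.fib n : ℝ) ≠ 0 := by
  exact_mod_cast (Nat.fib_pos.2 hn).ne'

theorem fib_add_mul_fib_add_sub_fib_mul_fib_add_add (a i j : ℕ) :
    (Nat.fib (a + i) : ℝ) * Nat.fib (a + j) - Nat.fib a * Nat.fib (a + i + j) =
      (-1) ^ a * Nat.fib i * Nat.fib j := by
  simp only [Real.coe_fib_eq]
  set φ := Real.goldenRatio
  set ψ := Real.goldenConj
  have h5 : √5 * √5 = 5 := Real.mul_self_sqrt (by norm_num)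
  have binet : (φ ^ (a + i) - ψ ^ (a + i)) * (φ ^ (a + j) - ψ ^ (a + j)) -
      (φ ^ a - ψ ^ a) * (φ ^ (a + i + j) - ψ ^ (a + i + j)) =
      (φ * ψ) ^ a * ((φ ^ i - ψ ^ i) * (φ ^ j - ψ ^ j)) := by
    simp only [pow_add, mul_pow]
    ring
  rw [div_mul_div_comm, div_mul_div_comm, h5, div_sub_div_same, binet,
    Real.goldenRatio_mul_goldenConj, mul_div_assoc, mul_assoc, div_mul_div_comm, h5]

lemma fibinom_zero (m : ℕ) : fibinom m 0 = 1 := prod_range_zero _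

lemma fibinom_succ (m k : ℕ) :
    fibinom m (k + 1) = fibinom m k * ((Nat.fib (m - k) : ℝ) / Nat.fib (k + 1)) :=
  prod_range_succ _ _

lemma fibinom_eq_zero_of_lt {m k : ℕ} (h : m < k) : fibinom m k = 0 :=
  prod_eq_zero (mem_range.2 h) (by simp)

lemma fibinom_pos {m k : ℕ} (h : k ≤ m) : 0 < fibinom m k :=
  prod_pos fun j hj => by
    have := mem_range.1 hj
    exact div_pos (by exact_mod_cast Nat.fib_pos.2 (by omega))
      (by exact_mod_cast Nat.fib_pos.2 (by omega))

lemma fibinom_succ_succ_eq_mul (m k : ℕ) :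
    fibinom (m + 1) (k + 1) = (Nat.fib (m + 1) : ℝ) / Nat.fib (k + 1) * fibinom m k := by
  unfold fibinom
  rw [prod_div_distrib, prod_div_distrib, prod_range_succ', prod_range_succ]
  simp only [Nat.add_sub_add_right, Nat.sub_zero]
  field_simp

lemma fibinom_succ_succ (m k : ℕ) :
    fibinom (m + 1) (k + 1) =
      Nat.fib (m + 1 - k) * fibinom m k + Nat.fib k * fibinom m (k + 1) := by
  rcases lt_or_ge m k with hmk | hkm
  · simp [fibinom_eq_zero_of_lt, hmk, hmk.trans k.lt_succ_self]
  have hfib : (Nat.fib (m + 1) : ℝ) =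
      Nat.fib (m + 1 - k) * Nat.fib (k + 1) + Nat.fib k * Nat.fib (m - k) := by
    have := Nat.fib_add (m - k) k
    rw [Nat.sub_add_cancel hkm] at this
    rw [this, Nat.sub_add_comm hkm]
    push_cast
    ring
  rw [fibinom_succ_succ_eq_mul, fibinom_succ, hfib]
  field_simp [cast_fib_ne_zero k.succ_pos]

lemma fibinom_mem_range_intCast (m k : ℕ) : fibinom m k ∈ (Int.castRingHom ℝ).range := by
  induction m generalizing k with
  | zero =>
    cases k with
    | zero => simp [fibinom_zero]
    | succ k => simp [fibinom_eq_zero_of_lt k.succ_pos]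
  | succ m ih =>
    cases k with
    | zero => simp [fibinom_zero]
    | succ k =>
      rw [fibinom_succ_succ]
      exact add_mem (mul_mem (natCast_mem _ _) (ih k)) (mul_mem (natCast_mem _ _) (ih (k + 1)))

lemma fibinom_add_self (a k : ℕ) :
    fibinom (a + k) k = ∏ i ∈ range k, (Nat.fib (a + i + 1) : ℝ) / Nat.fib (i + 1) := by
  induction k with
  | zero => exact fibinom_zero a
  | succ k ih => rw [← add_assoc, fibinom_succ_succ_eq_mul, ih, prod_range_succ, mul_comm]

lemma Matrix.det_succ_column_zero_of_eq_zero {R : Type*} [CommRing R] {n : ℕ}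
    (A : Matrix (Fin (n + 1)) (Fin (n + 1)) R) (hA : ∀ i, i ≠ 0 → A i 0 = 0) :
    A.det = A 0 0 * (A.submatrix Fin.succ Fin.succ).det := by
  rw [Matrix.det_succ_column_zero, Fintype.sum_eq_single 0 fun i hi => by simp [hA i hi]]
  simp

noncomputable def filbertMatrix (α n : ℕ) : Matrix (Fin n) (Fin n) ℝ :=
  Matrix.of fun i j => 1 / (Nat.fib (α + i + j) : ℝ)

lemma det_filbertMatrix_succ_succ_eq_inv_fib_mul_det {α : ℕ} (hα : 1 ≤ α) (n : ℕ) :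
    (filbertMatrix α (n + 2)).det = (Nat.fib α : ℝ)⁻¹ * (Matrix.of fun i j : Fin (n + 1) =>
      (-1) ^ α * Nat.fib (i + 1) * Nat.fib (j + 1) /
        (Nat.fib (α + i + 1) * Nat.fib (α + j + 1) * Nat.fib (α + 2 + i + j) : ℝ)).det := by
  have hF : ∀ m, 0 < m → (Nat.fib m : ℝ) ≠ 0 := fun m => cast_fib_ne_zero
  set B : Matrix (Fin (n + 2)) (Fin (n + 2)) ℝ := Matrix.of fun i j =>
    if i = 0 then 1 / (Nat.fib (α + j) : ℝ)
    else (-1) ^ α * Nat.fib i * Nat.fib j /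
      (Nat.fib (α + i) * Nat.fib (α + j) * Nat.fib (α + i + j))
  have hrow : (filbertMatrix α (n + 2)).det = B.det := by
    refine Matrix.det_eq_of_forall_row_eq_smul_add_const
      (fun i => if i = 0 then 0 else Nat.fib α / (Nat.fib (α + i) : ℝ)) 0 (by simp)
      fun i j => ?_
    rcases eq_or_ne i 0 with rfl | hi
    · simp [filbertMatrix, B]
    · have := fib_add_mul_fib_add_sub_fib_mul_fib_add_add α i j
      simp only [filbertMatrix, B, Matrix.of_apply, if_neg hi, if_pos, Fin.val_zero, add_zero]
      field_simp [hF (α + i) (by omega), hF (α + j) (by omega), hF (α + i + j) (by omega)]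
      linear_combination this
  rw [hrow, Matrix.det_succ_column_zero_of_eq_zero B fun i hi => by simp [B, hi]]
  congr 1
  · simp [B]
  · congr 1
    ext i j
    simp only [B, Matrix.submatrix_apply, Matrix.of_apply, if_neg (Fin.succ_ne_zero i),
      Fin.val_succ]
    rw [show α + (i + 1) + (j + 1) = α + 2 + i + j by omega]
    ring_nf

lemma det_filbertMatrix_succ_succ {α : ℕ} (hα : 1 ≤ α) (n : ℕ) :
    (filbertMatrix α (n + 2)).det =
      ((-1) ^ (α * (n + 1)) * Nat.fib α * fibinom (α + (n + 1)) (n + 1) ^ 2)⁻¹ *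
        (filbertMatrix (α + 2) (n + 1)).det := by
  set v : Fin (n + 1) → ℝ := fun i => (-1) ^ α * (Nat.fib (i + 1) / Nat.fib (α + i + 1))
  set w : Fin (n + 1) → ℝ := fun j => Nat.fib (j + 1) / Nat.fib (α + j + 1)
  have hscale : (Matrix.of fun i j : Fin (n + 1) =>
      (-1) ^ α * Nat.fib (i + 1) * Nat.fib (j + 1) /
        (Nat.fib (α + i + 1) * Nat.fib (α + j + 1) * Nat.fib (α + 2 + i + j) : ℝ)) =
      Matrix.of fun i j =>
        v i * (Matrix.of fun i j => w j * filbertMatrix (α + 2) (n + 1) i j) i j := by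
    ext i j
    simp only [v, w, filbertMatrix, Matrix.of_apply]
    field_simp
  have hprod : ∏ i : Fin (n + 1), (Nat.fib (i + 1) / Nat.fib (α + i + 1) : ℝ) =
      (fibinom (α + (n + 1)) (n + 1))⁻¹ := by
    rw [fibinom_add_self, ← prod_inv_distrib,
      Fin.prod_univ_eq_prod_range (fun i => (Nat.fib (i + 1) / Nat.fib (α + i + 1) : ℝ))]
    simp only [inv_div]
  rw [det_filbertMatrix_succ_succ_eq_inv_fib_mul_det hα, hscale, Matrix.det_mul_column,
    Matrix.det_mul_row, prod_mul_distrib, prod_const, hprod]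
  simp only [card_univ, Fintype.card_fin, pow_mul, mul_inv_rev, ← inv_pow, inv_neg_one]
  ring

lemma det_filbertMatrix_one (α : ℕ) : (filbertMatrix α 1).det = (Nat.fib α : ℝ)⁻¹ := by
  simp [filbertMatrix]

noncomputable def filbertDetInv (α n : ℕ) : ℝ :=
  (-1) ^ (α * (n + 1).choose 2) *
    ∏ k ∈ range (n + 1), (Nat.fib (α + 2 * k) : ℝ) * fibinom (α + 2 * k - 1) k ^ 2

lemma filbertDetInv_zero (α : ℕ) : filbertDetInv α 0 = Nat.fib α := by
  simp [filbertDetInv, fibinom_zero]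

lemma filbertDetInv_succ (α n : ℕ) :
    filbertDetInv α (n + 1) =
      (-1) ^ (α * (n + 1)) * Nat.fib α * fibinom (α + (n + 1)) (n + 1) ^ 2 *
        filbertDetInv (α + 2) n := by
  have hsign : (-1 : ℝ) ^ (α * (n + 1 + 1).choose 2) =
      (-1) ^ (α * (n + 1)) * (-1) ^ ((α + 2) * (n + 1).choose 2) := by
    rw [Nat.choose_succ_succ' (n + 1) 1, Nat.choose_one_right, mul_add, pow_add, add_mul,
      pow_add (-1 : ℝ) _ (2 * _), pow_mul _ 2, neg_one_sq, one_pow, mul_one]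
  have hfactor : ∀ k ∈ range (n + 1),
      (Nat.fib (α + 2 * (k + 1)) : ℝ) * fibinom (α + 2 * (k + 1) - 1) (k + 1) ^ 2 =
        Nat.fib (α + 2 + 2 * k) * fibinom (α + 2 + 2 * k - 1) k ^ 2 *
          (Nat.fib (α + k + 1) / Nat.fib (k + 1) : ℝ) ^ 2 := by
    intro k _
    rw [show α + 2 * (k + 1) - 1 = α + 2 * k + 1 by omega, fibinom_succ,
      show α + 2 * k + 1 - k = α + k + 1 by omega,
      show α + 2 + 2 * k - 1 = α + 2 * k + 1 by omega,
      show α + 2 * (k + 1) = α + 2 + 2 * k by omega]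
    ring
  rw [filbertDetInv, filbertDetInv, prod_range_succ', prod_congr rfl hfactor, prod_mul_distrib,
    prod_pow, ← fibinom_add_self, hsign]
  simp only [mul_zero, add_zero, fibinom_zero, one_pow, mul_one]
  ring

lemma filbertDetInv_ne_zero {α : ℕ} (hα : 1 ≤ α) (n : ℕ) : filbertDetInv α n ≠ 0 :=
  mul_ne_zero (pow_ne_zero _ (by norm_num)) <| prod_ne_zero_iff.2 fun _ _ =>
    mul_ne_zero (cast_fib_ne_zero (by omega)) (pow_ne_zero _ (fibinom_pos (by omega)).ne')

lemma filbertDetInv_mem_range_intCast (α n : ℕ) :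
    filbertDetInv α n ∈ (Int.castRingHom ℝ).range :=
  mul_mem (pow_mem (neg_mem (one_mem _)) _) <| prod_mem fun _ _ =>
    mul_mem (natCast_mem _ _) (pow_mem (fibinom_mem_range_intCast _ _) _)

lemma filbertDetInv_eq (α n : ℕ) :
    filbertDetInv α n = (-1 : ℝ) ^ (α * Nat.choose (n + 1) 2) * (Nat.fib α : ℝ) *
      ∏ k ∈ Icc 1 n, (Nat.fib (α + 2 * k) : ℝ) * fibinom (α + 2 * k - 1) k ^ 2 := by
  rw [filbertDetInv, range_eq_Ico, prod_eq_prod_Ico_succ_bot (by omega : 0 < n + 1), zero_add,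
    Ico_add_one_right_eq_Icc]
  simp [fibinom_zero, mul_assoc]

theorem det_filbertMatrix {α : ℕ} (hα : 1 ≤ α) (n : ℕ) :
    (filbertMatrix α (n + 1)).det = (filbertDetInv α n)⁻¹ := by
  induction n generalizing α with
  | zero => rw [det_filbertMatrix_one, filbertDetInv_zero]
  | succ n ih =>
    rw [det_filbertMatrix_succ_succ hα, ih (by omega), filbertDetInv_succ]
    simp only [mul_inv]

theorem filbert_det (α : ℕ) (hα : 1 ≤ α) (n : ℕ) :
    (Matrix.of fun i j : Fin (n + 1) =>
        (1 : ℝ) / (Nat.fib (α + (i : ℕ) + (j : ℕ)) : ℝ)).det =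
      ((-1 : ℝ) ^ (α * Nat.choose (n + 1) 2) * (Nat.fib α : ℝ) *
          ∏ k ∈ Finset.Icc 1 n, (Nat.fib (α + 2 * k) : ℝ) * fibinom (α + 2 * k - 1) k ^ 2)⁻¹ ∧
      ∃ z : ℤ, z ≠ 0 ∧
        (Matrix.of fun i j : Fin (n + 1) =>
            (1 : ℝ) / (Nat.fib (α + (i : ℕ) + (j : ℕ)) : ℝ)).det = ((z : ℝ))⁻¹ := by
  have hdet : (filbertMatrix α (n + 1)).det = (filbertDetInv α n)⁻¹ := det_filbertMatrix hα n
  obtain ⟨z, hz⟩ := filbertDetInv_mem_range_intCast α n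
  rw [eq_intCast] at hz
  refine ⟨by rw [← filbertDetInv_eq]; exact hdet, z, ?_, by rw [hz]; exact hdet⟩
  rintro rfl
  exact filbertDetInv_ne_zero hα n (by simp [← hz])
end
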